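/- arXiv:2307.00321 — 8 statements merged into one kernel-verified Lean document; each statement's English description precedes it below -/
import Mathlib

section
/- For every λ ∈ ℝⁿ and μ ∈ ℝᵐ, the minimum of L(X, λ, μ) := ⟨C, X⟩ + (γ/2)‖X‖₂² + λᵀ(X 1_m − a) + μᵀ(Xᵀ 1_n − b) over matrices X ∈ ℝ^{n×m} with nonnegative entries equals the dual function value φ(λ, μ) = −(1/(2γ)) Σ_{j=1}^m ‖[−C_j − λ − μ_j 1_n]_+‖₂² − λᵀ a − μᵀ b, where C_j ∈ ℝⁿ denotes the j-th column of C and [·]_+ is applied entrywise. -/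
open Finset MeasureTheory

noncomputable section

namespace OT

def inn {n m : ℕ} (C X : Matrix (Fin n) (Fin m) ℝ) : ℝ := ∑ i, ∑ j, C i j * X i j

def nsq {n m : ℕ} (X : Matrix (Fin n) (Fin m) ℝ) : ℝ := ∑ i, ∑ j, (X i j) ^ 2

def l1m {n m : ℕ} (X : Matrix (Fin n) (Fin m) ℝ) : ℝ := ∑ i, ∑ j, |X i j|

def rowSum {n m : ℕ} (X : Matrix (Fin n) (Fin m) ℝ) (i : Fin n) : ℝ := ∑ j, X i j

def colSum {n m : ℕ} (X : Matrix (Fin n) (Fin m) ℝ) (j : Fin m) : ℝ := ∑ i, X i j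

def fobj {n m : ℕ} (C : Matrix (Fin n) (Fin m) ℝ) (γ : ℝ) (X : Matrix (Fin n) (Fin m) ℝ) : ℝ :=
  inn C X + γ / 2 * nsq X

def Lag {n m : ℕ} (C : Matrix (Fin n) (Fin m) ℝ) (γ : ℝ) (a : Fin n → ℝ) (b : Fin m → ℝ)
    (X : Matrix (Fin n) (Fin m) ℝ) (lam : Fin n → ℝ) (mu : Fin m → ℝ) : ℝ :=
  inn C X + γ / 2 * nsq X + (∑ i, lam i * (rowSum X i - a i)) + (∑ j, mu j * (colSum X j - b j))

def plan {n m : ℕ} (C : Matrix (Fin n) (Fin m) ℝ) (γ : ℝ) (lam : Fin n → ℝ) (mu : Fin m → ℝ) :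
    Matrix (Fin n) (Fin m) ℝ :=
  fun i j => max 0 (-(C i j) - lam i - mu j) / γ

def phi {n m : ℕ} (C : Matrix (Fin n) (Fin m) ℝ) (γ : ℝ) (a : Fin n → ℝ) (b : Fin m → ℝ)
    (lam : Fin n → ℝ) (mu : Fin m → ℝ) : ℝ :=
  -(1 / (2 * γ)) * (∑ i, ∑ j, (max 0 (-(C i j) - lam i - mu j)) ^ 2)
    - (∑ i, lam i * a i) - (∑ j, mu j * b j)

def memU {n m : ℕ} (a : Fin n → ℝ) (b : Fin m → ℝ) (X : Matrix (Fin n) (Fin m) ℝ) : Prop :=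
  (∀ i j, 0 ≤ X i j) ∧ (∀ i, rowSum X i = a i) ∧ (∀ j, colSum X j = b j)

def Cinf {n m : ℕ} (C : Matrix (Fin n) (Fin m) ℝ) : ℝ := ⨆ p : Fin n × Fin m, C p.1 p.2

def Rbound {n m : ℕ} (C : Matrix (Fin n) (Fin m) ℝ) (γ : ℝ) (a : Fin n → ℝ) (b : Fin m → ℝ) : ℝ :=
  Cinf C + γ / (min (n : ℝ) (m : ℝ)) * (1 - max (⨆ i, a i) (⨆ j, b j))

end OT

lemma one_dim (γ c x : ℝ) (hγ : 0 < γ) (hx : 0 ≤ x) :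
    -(max 0 (-c))^2/(2*γ) ≤ c*x + γ/2 * x^2 := by
  rcases le_or_gt 0 c with h | h
  · rw [max_eq_left (by linarith : -c ≤ 0)]
    have h0 : -(0:ℝ)^2/(2*γ) = 0 := by simp
    rw [h0]
    positivity
  · rw [max_eq_right (by linarith : (0:ℝ) ≤ -c)]
    rw [div_le_iff₀ (by linarith : (0:ℝ) < 2*γ)] at *
    nlinarith [sq_nonneg (γ*x+c)]

lemma one_dim_eq (γ c : ℝ) (hγ : 0 < γ) :
    c * (max 0 (-c) / γ) + γ/2 * (max 0 (-c) / γ)^2 = -(max 0 (-c))^2/(2*γ) := by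
  rcases le_or_gt 0 c with h | h
  · rw [max_eq_left (by linarith : -c ≤ 0)]; ring
  · rw [max_eq_right (by linarith : (0:ℝ) ≤ -c)]
    field_simp
    ring

open OT in
lemma Lag_eq' {n m : ℕ} (C : Matrix (Fin n) (Fin m) ℝ) (γ : ℝ) (a : Fin n → ℝ) (b : Fin m → ℝ)
    (X : Matrix (Fin n) (Fin m) ℝ) (lam : Fin n → ℝ) (mu : Fin m → ℝ) :
    Lag C γ a b X lam mu =
      (∑ i, ∑ j, ((C i j + lam i + mu j) * X i j + γ/2 * (X i j)^2))
        - (∑ i, lam i * a i) - (∑ j, mu j * b j) := by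
  have h1 : ∑ i, lam i * (rowSum X i - a i)
      = (∑ i, ∑ j, lam i * X i j) - ∑ i, lam i * a i := by
    simp [rowSum, mul_sub, Finset.mul_sum, Finset.sum_sub_distrib]
  have h2 : ∑ j, mu j * (colSum X j - b j)
      = (∑ i, ∑ j, mu j * X i j) - ∑ j, mu j * b j := by
    rw [Finset.sum_comm]
    simp [colSum, mul_sub, Finset.mul_sum, Finset.sum_sub_distrib]
  have h3 : ∑ i, ∑ j, ((C i j + lam i + mu j) * X i j + γ/2 * (X i j)^2)
      = (∑ i, ∑ j, C i j * X i j) + (∑ i, ∑ j, lam i * X i j)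
        + (∑ i, ∑ j, mu j * X i j) + γ/2 * (∑ i, ∑ j, (X i j)^2) := by
    rw [Finset.mul_sum]
    simp only [Finset.mul_sum, ← Finset.sum_add_distrib]
    refine Finset.sum_congr rfl fun i _ => ?_
    refine Finset.sum_congr rfl fun j _ => ?_
    ring
  simp only [Lag, inn, nsq, h1, h2, h3]
  ring

open OT in
theorem stmt1 {n m : ℕ} (hn : 0 < n) (hm : 0 < m)
    (a : Fin n → ℝ) (b : Fin m → ℝ) (ha : ∀ i, 0 ≤ a i) (ha1 : ∑ i, a i = 1)
    (hb : ∀ j, 0 ≤ b j) (hb1 : ∑ j, b j = 1)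
    (C : Matrix (Fin n) (Fin m) ℝ) (hC : ∀ i j, 0 ≤ C i j)
    (γ : ℝ) (hγ : 0 < γ) (lam : Fin n → ℝ) (mu : Fin m → ℝ) :
    IsLeast {v : ℝ | ∃ X : Matrix (Fin n) (Fin m) ℝ,
        (∀ i j, 0 ≤ X i j) ∧ Lag C γ a b X lam mu = v}
      (phi C γ a b lam mu) := by
  have key : ∀ i j, -(C i j) - lam i - mu j = -(C i j + lam i + mu j) := fun i j => by ring
  have hphi : phi C γ a b lam mu =
      (∑ i, ∑ j, -(max 0 (-(C i j + lam i + mu j)))^2/(2*γ))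
        - (∑ i, lam i * a i) - (∑ j, mu j * b j) := by
    simp only [phi, key]
    congr 1
    congr 1
    rw [neg_mul, Finset.mul_sum, ← Finset.sum_neg_distrib]
    refine Finset.sum_congr rfl fun i _ => ?_
    rw [Finset.mul_sum, ← Finset.sum_neg_distrib]
    refine Finset.sum_congr rfl fun j _ => ?_
    ring
  constructor
  · refine ⟨plan C γ lam mu, fun i j => div_nonneg (le_max_left _ _) hγ.le, ?_⟩
    rw [Lag_eq', hphi]
    congr 1
    congr 1
    refine Finset.sum_congr rfl fun i _ => Finset.sum_congr rfl fun j _ => ?_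
    simp only [plan, key]
    exact one_dim_eq γ _ hγ
  · rintro v ⟨X, hX, rfl⟩
    rw [Lag_eq', hphi]
    refine sub_le_sub_right (sub_le_sub_right ?_ _) _
    refine Finset.sum_le_sum fun i _ => Finset.sum_le_sum fun j _ => ?_
    exact one_dim γ _ _ hγ (hX i j)
end
end

section
/- The dual function φ(λ, μ) = −(1/(2γ)) Σ_{i,j} ([−c_{ij} − λ_i − μ_j]_+)² − λᵀa − μᵀb is concave and continuously differentiable on ℝⁿ × ℝᵐ, with ∇_λ φ(λ, μ) = X(λ, μ) 1_m − a and ∇_μ φ(λ, μ) = X(λ, μ)ᵀ 1_n − b. -/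
/-!
The summands of `φ` are, up to the factor `-1/(2γ)`, the convex `C¹` function `t ↦ [t]₊²`
(derivative `2 [t]₊`) composed with the affine maps `(λ, μ) ↦ -cᵢⱼ - λᵢ - μⱼ`; the rest is linear.
The chain rule gives the derivative `(q, r) ↦ ∑ᵢⱼ Xᵢⱼ (qᵢ + rⱼ) - aᵀq - bᵀr`, and regrouping the
double sum by rows and by columns turns it into the marginal form.
-/

open Finset MeasureTheory

noncomputable section

open Filter Topology Asymptotics

lemma hasDerivAt_sq_max_zero (t : ℝ) : HasDerivAt (fun x : ℝ => max 0 x ^ 2) (2 * max 0 t) t := by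
  rcases lt_trichotomy t 0 with ht | rfl | ht
  · have hzero : (fun x : ℝ => max 0 x ^ 2) =ᶠ[𝓝 t] fun _ => 0 := by
      filter_upwards [eventually_lt_nhds ht] with x hx
      simp [hx.le]
    simpa [ht.le] using (hasDerivAt_const t (0 : ℝ)).congr_of_eventuallyEq hzero
  · rw [max_self, mul_zero, hasDerivAt_iff_isLittleO]
    simp only [max_self, zero_pow two_ne_zero, sub_zero, smul_zero]
    refine IsBigO.trans_isLittleO (IsBigO.of_bound 1 (Eventually.of_forall fun x => ?_))
      (isLittleO_pow_id one_lt_two)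
    rw [one_mul, Real.norm_of_nonneg (by positivity), Real.norm_of_nonneg (by positivity),
      ← sq_abs x]
    exact pow_le_pow_left₀ (le_max_left _ _) (max_le (abs_nonneg x) (le_abs_self x)) 2
  · have hsq : (fun x : ℝ => max 0 x ^ 2) =ᶠ[𝓝 t] fun x => x ^ 2 := by
      filter_upwards [eventually_gt_nhds ht] with x hx
      simp [hx.le]
    simpa [ht.le] using (hasDerivAt_pow 2 t).congr_of_eventuallyEq hsq

lemma contDiff_sq_max_zero : ContDiff ℝ 1 fun x : ℝ => max 0 x ^ 2 := by
  rw [contDiff_one_iff_deriv]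
  refine ⟨fun t => (hasDerivAt_sq_max_zero t).differentiableAt, ?_⟩
  rw [funext fun t => (hasDerivAt_sq_max_zero t).deriv]
  fun_prop

lemma convexOn_sq_max_zero : ConvexOn ℝ Set.univ fun x : ℝ => max 0 x ^ 2 :=
  ((convexOn_const 0 convex_univ).sup (convexOn_id convex_univ)).pow
    (fun _ _ => le_max_left _ _) 2

lemma ConcaveOn.sum {𝕜 E β ι : Type*} [Semiring 𝕜] [PartialOrder 𝕜] [AddCommMonoid E]
    [AddCommMonoid β] [PartialOrder β] [IsOrderedAddMonoid β] [SMul 𝕜 E] [Module 𝕜 β]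
    {s : Set E} {t : Finset ι} {f : ι → E → β} (hs : Convex 𝕜 s)
    (hf : ∀ i ∈ t, ConcaveOn 𝕜 s (f i)) : ConcaveOn 𝕜 s fun x => ∑ i ∈ t, f i x := by
  classical
  induction t using Finset.induction_on with
  | empty => simpa using concaveOn_const (0 : β) hs
  | insert i t hi ih =>
    simp only [Finset.sum_insert hi]
    exact (hf i (Finset.mem_insert_self i t)).add
      (ih fun k hk => hf k (Finset.mem_insert_of_mem hk))

section
variable {E : Type*} [NormedAddCommGroup E] [NormedSpace ℝ E]

lemma hasFDerivAt_sq_max_zero_const_sub (c : ℝ) (L : E →L[ℝ] ℝ) (p : E) :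
    HasFDerivAt (fun q => max 0 (c - L q) ^ 2) ((-(2 * max 0 (c - L p))) • L) p := by
  have := (hasDerivAt_sq_max_zero (c - L p)).comp_hasFDerivAt p
    ((hasFDerivAt_const c p).sub L.hasFDerivAt)
  rwa [zero_sub, smul_neg, ← neg_smul] at this

lemma convexOn_sq_max_zero_const_sub (c : ℝ) (L : E →L[ℝ] ℝ) :
    ConvexOn ℝ Set.univ fun q => max 0 (c - L q) ^ 2 :=
  convexOn_sq_max_zero.comp_affineMap
    (AffineMap.const ℝ E c - L.toLinearMap.toAffineMap)

lemma contDiff_sq_max_zero_const_sub (c : ℝ) (L : E →L[ℝ] ℝ) :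
    ContDiff ℝ 1 fun q => max 0 (c - L q) ^ 2 :=
  contDiff_sq_max_zero.comp (contDiff_const.sub L.contDiff)

end

namespace OT

variable {n m : ℕ}

open ContinuousLinearMap in
def pairSum (i : Fin n) (j : Fin m) : (Fin n → ℝ) × (Fin m → ℝ) →L[ℝ] ℝ :=
  proj i ∘L fst ℝ (Fin n → ℝ) (Fin m → ℝ) + proj j ∘L snd ℝ (Fin n → ℝ) (Fin m → ℝ)

@[simp]
lemma pairSum_apply (i : Fin n) (j : Fin m) (p : (Fin n → ℝ) × (Fin m → ℝ)) :
    pairSum i j p = p.1 i + p.2 j := rfl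

open ContinuousLinearMap in
def pairing (a : Fin n → ℝ) (b : Fin m → ℝ) : (Fin n → ℝ) × (Fin m → ℝ) →L[ℝ] ℝ :=
  ∑ i, a i • proj i ∘L fst ℝ _ _ + ∑ j, b j • proj j ∘L snd ℝ _ _

@[simp]
lemma pairing_apply (a : Fin n → ℝ) (b : Fin m → ℝ) (p : (Fin n → ℝ) × (Fin m → ℝ)) :
    pairing a b p = ∑ i, a i * p.1 i + ∑ j, b j * p.2 j := by
  simp [pairing]

lemma pairing_sub (a a' : Fin n → ℝ) (b b' : Fin m → ℝ) :
    pairing (a - a') (b - b') = pairing a b - pairing a' b' := by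
  refine ContinuousLinearMap.ext fun p => ?_
  simp only [pairing_apply, Pi.sub_apply, sub_mul, sum_sub_distrib, _root_.sub_apply]
  ring

lemma sum_sum_smul_pairSum (X : Matrix (Fin n) (Fin m) ℝ) :
    ∑ i, ∑ j, X i j • pairSum i j = pairing (rowSum X) (colSum X) := by
  refine ContinuousLinearMap.ext fun p => ?_
  simp only [_root_.sum_apply, _root_.smul_apply, pairSum_apply,
    smul_eq_mul, mul_add, sum_add_distrib, pairing_apply, rowSum, colSum, sum_mul]
  rw [sum_comm (f := fun i j => X i j * p.2 j)]

variable (C : Matrix (Fin n) (Fin m) ℝ) (γ : ℝ) (a : Fin n → ℝ) (b : Fin m → ℝ)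

lemma phi_eq (p : (Fin n → ℝ) × (Fin m → ℝ)) :
    phi C γ a b p.1 p.2
      = ∑ i, ∑ j, -(1 / (2 * γ)) * max 0 (-C i j - pairSum i j p) ^ 2 - pairing a b p := by
  simp only [phi, pairSum_apply, pairing_apply, mul_sum, sub_sub, mul_comm (p.1 _),
    mul_comm (p.2 _)]

lemma concaveOn_phi (hγ : 0 ≤ γ) :
    ConcaveOn ℝ Set.univ fun p : (Fin n → ℝ) × (Fin m → ℝ) => phi C γ a b p.1 p.2 := by
  simp_rw [phi_eq]
  refine (ConcaveOn.sum convex_univ fun i _ => ConcaveOn.sum convex_univ fun j _ => ?_).sub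
    ((pairing a b).toLinearMap.convexOn convex_univ)
  simpa only [Pi.neg_apply, smul_eq_mul, mul_neg, neg_mul] using
    (convexOn_sq_max_zero_const_sub (-C i j) (pairSum i j)).neg.smul
      (by positivity : 0 ≤ 1 / (2 * γ))

lemma contDiff_phi :
    ContDiff ℝ 1 fun p : (Fin n → ℝ) × (Fin m → ℝ) => phi C γ a b p.1 p.2 := by
  simp_rw [phi_eq]
  exact (ContDiff.sum fun i _ => ContDiff.sum fun j _ => contDiff_const.mul
    (contDiff_sq_max_zero_const_sub _ _)).sub (pairing a b).contDiff

lemma hasFDerivAt_phi (p : (Fin n → ℝ) × (Fin m → ℝ)) :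
    HasFDerivAt (fun q : (Fin n → ℝ) × (Fin m → ℝ) => phi C γ a b q.1 q.2)
      (pairing (rowSum (plan C γ p.1 p.2) - a) (colSum (plan C γ p.1 p.2) - b)) p := by
  simp_rw [phi_eq]
  have hterm : ∀ i j, HasFDerivAt (fun q => -(1 / (2 * γ)) * max 0 (-C i j - pairSum i j q) ^ 2)
      (plan C γ p.1 p.2 i j • pairSum i j) p := by
    intro i j
    refine ((hasFDerivAt_sq_max_zero_const_sub (-C i j) (pairSum i j) p).const_mul
      (-(1 / (2 * γ)))).congr_fderiv ?_
    rw [smul_smul, plan, pairSum_apply, sub_sub]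
    ring_nf
  rw [pairing_sub, ← sum_sum_smul_pairSum]
  exact (HasFDerivAt.fun_sum fun i _ => HasFDerivAt.fun_sum fun j _ => hterm i j).sub
    (pairing a b).hasFDerivAt

end OT

open OT in
theorem stmt2_general {n m : ℕ}
    (a : Fin n → ℝ) (b : Fin m → ℝ)
    (C : Matrix (Fin n) (Fin m) ℝ)
    (γ : ℝ) (hγ : 0 < γ) :
    ConcaveOn ℝ Set.univ (fun p : (Fin n → ℝ) × (Fin m → ℝ) => phi C γ a b p.1 p.2) ∧
    ContDiff ℝ 1 (fun p : (Fin n → ℝ) × (Fin m → ℝ) => phi C γ a b p.1 p.2) ∧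
    ∀ p : (Fin n → ℝ) × (Fin m → ℝ), ∃ D : ((Fin n → ℝ) × (Fin m → ℝ)) →L[ℝ] ℝ,
      HasFDerivAt (fun q : (Fin n → ℝ) × (Fin m → ℝ) => phi C γ a b q.1 q.2) D p ∧
      ∀ q : (Fin n → ℝ) × (Fin m → ℝ),
        D q = (∑ i, (rowSum (plan C γ p.1 p.2) i - a i) * q.1 i)
          + ∑ j, (colSum (plan C γ p.1 p.2) j - b j) * q.2 j :=
  ⟨concaveOn_phi C γ a b hγ.le, contDiff_phi C γ a b,
    fun p => ⟨_, hasFDerivAt_phi C γ a b p, fun q => pairing_apply _ _ q⟩⟩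

open OT in
theorem stmt2 {n m : ℕ} (hn : 0 < n) (hm : 0 < m)
    (a : Fin n → ℝ) (b : Fin m → ℝ) (ha : ∀ i, 0 ≤ a i) (ha1 : ∑ i, a i = 1)
    (hb : ∀ j, 0 ≤ b j) (hb1 : ∑ j, b j = 1)
    (C : Matrix (Fin n) (Fin m) ℝ) (hC : ∀ i j, 0 ≤ C i j)
    (γ : ℝ) (hγ : 0 < γ) :
    ConcaveOn ℝ Set.univ (fun p : (Fin n → ℝ) × (Fin m → ℝ) => phi C γ a b p.1 p.2) ∧
    ContDiff ℝ 1 (fun p : (Fin n → ℝ) × (Fin m → ℝ) => phi C γ a b p.1 p.2) ∧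
    ∀ p : (Fin n → ℝ) × (Fin m → ℝ), ∃ D : ((Fin n → ℝ) × (Fin m → ℝ)) →L[ℝ] ℝ,
      HasFDerivAt (fun q : (Fin n → ℝ) × (Fin m → ℝ) => phi C γ a b q.1 q.2) D p ∧
      ∀ q : (Fin n → ℝ) × (Fin m → ℝ),
        D q = (∑ i, (rowSum (plan C γ p.1 p.2) i - a i) * q.1 i)
          + ∑ j, (colSum (plan C γ p.1 p.2) j - b j) * q.2 j :=
  stmt2_general a b C γ hγ
end
end

section
/- Fix i ∈ {1, …, n} and μ ∈ ℝᵐ, write d ∈ ℝᵐ for the vector with entries d_j = c_{ij} + μ_j, and let d_{(1)} ≤ d_{(2)} ≤ … ≤ d_{(m)} be its entries sorted in nondecreasing order. Define f_i(λ) = Σ_{j=1}^m [−d_j − λ]_+. Let l be the largest index j ∈ {1, …, m} such that f_i(−d_{(j)}) ≤ γ a_i (such l exists since f_i(−d_{(1)}) = 0). Then λ_i = −(γ a_i + Σ_{j=1}^l d_{(j)}) / l satisfies f_i(λ_i) = γ a_i, i.e., this explicit formula gives an exact solution of the first-order optimality condition Σ_{j=1}^m [−c_{ij} − λ_i − μ_j]_+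 = γ a_i. -/
open Finset MeasureTheory

noncomputable section

/-!
With `x = -λ`, the function `f(λ) = ∑ⱼ [-dⱼ - λ]₊` becomes `∑ⱼ [x - dⱼ]₊`. Indexing the sorted
entries from `0` as in `Fin m`, whenever `x` separates `d₍₀₎ ≤ … ≤ d₍ₗ₎` from the remaining entries,
this sum is the affine function `(l + 1) x - ∑_{k ≤ l} d₍ₖ₎`. The maximality of `l` puts the root of
this affine function between `d₍ₗ₎` and `d₍ₗ₊₁₎`, i.e. inside the range where the formula is valid.
-/

section WaterFilling

variable {ι α : Type*} [Fintype ι]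

theorem sum_max_zero_sub_eq_of_separates (d : ι → ℝ) (s : Finset ι) {x : ℝ}
    (hs : ∀ j ∈ s, d j ≤ x) (hsc : ∀ j ∉ s, x ≤ d j) :
    ∑ j, max 0 (x - d j) = #s * x - ∑ j ∈ s, d j := by
  classical
  rw [← sum_filter_add_sum_filter_not univ (· ∈ s), filter_mem_eq_inter, univ_inter,
    sum_eq_zero fun j hj => max_eq_left (sub_nonpos.2 (hsc j (mem_filter.1 hj).2)), add_zero,
    sum_congr rfl fun j hj => max_eq_right (sub_nonneg.2 (hs j hj)),
    sum_sub_distrib, sum_const, nsmul_eq_mul]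

variable [Fintype α] [LinearOrder α] [LocallyFiniteOrderBot α]

theorem sum_max_zero_sub_eq_of_sorted {d : ι → ℝ} {σ : α ≃ ι}
    (hsort : Monotone fun j => d (σ j)) {l : α} {x : ℝ}
    (hlx : d (σ l) ≤ x) (hxl : ∀ j, l < j → x ≤ d (σ j)) :
    ∑ j, max 0 (x - d j) = #(Iic l) * x - ∑ k ∈ Iic l, d (σ k) := by
  rw [← σ.sum_comp]
  refine sum_max_zero_sub_eq_of_separates (fun j => d (σ j)) (Iic l) ?_ ?_
  · exact fun j hj => (hsort (mem_Iic.1 hj)).trans hlx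
  · exact fun j hj => hxl j (not_le.1 (mem_Iic.not.1 hj))

theorem sum_max_zero_sub_waterLevel_eq [SuccOrder α] {d : ι → ℝ} {σ : α ≃ ι}
    (hsort : Monotone fun j => d (σ j)) {t : ℝ} {l : α}
    (hl : ∑ j, max 0 (d (σ l) - d j) ≤ t)
    (hlmax : ∀ k, ∑ j, max 0 (d (σ k) - d j) ≤ t → k ≤ l) :
    ∑ j, max 0 ((t + ∑ k ∈ Iic l, d (σ k)) / #(Iic l) - d j) = t := by
  set S := ∑ k ∈ Iic l, d (σ k)
  have hN : (0 : ℝ) < #(Iic l) := by exact_mod_cast card_pos.2 ⟨l, mem_Iic.2 le_rfl⟩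
  have hlevel : d (σ l) ≤ (t + S) / #(Iic l) := by
    have := sum_max_zero_sub_eq_of_sorted (x := d (σ l)) hsort le_rfl fun j hj => hsort hj.le
    rw [le_div_iff₀ hN]
    linarith
  have habove : ∀ j, l < j → (t + S) / #(Iic l) ≤ d (σ j) := by
    intro j hj
    have hsucc : l < Order.succ l := Order.lt_succ_of_not_isMax (not_isMax_of_lt hj)
    have hsum := sum_max_zero_sub_eq_of_sorted hsort (hsort hsucc.le)
      fun k hk => hsort (Order.succ_le_of_lt hk)
    have hgt : t < ∑ k, max 0 (d (σ (Order.succ l)) - d k) :=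
      not_le.1 fun h => hsucc.not_ge (hlmax _ h)
    calc (t + S) / #(Iic l) ≤ d (σ (Order.succ l)) := by
          rw [div_le_iff₀ hN]
          linarith
      _ ≤ d (σ j) := hsort (Order.succ_le_of_lt hj)
  rw [sum_max_zero_sub_eq_of_sorted hsort hlevel habove]
  field_simp
  ring

end WaterFilling

open OT in
theorem stmt4_general {n m : ℕ}
    (a : Fin n → ℝ)
    (C : Matrix (Fin n) (Fin m) ℝ)
    (γ : ℝ) (i : Fin n) (mu : Fin m → ℝ)
    (σ : Equiv.Perm (Fin m))
    (hsort : Monotone (fun j : Fin m => C i (σ j) + mu (σ j)))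
    (l : Fin m)
    (hl : (∑ j, max 0 ((C i (σ l) + mu (σ l)) - (C i j + mu j))) ≤ γ * a i)
    (hlmax : ∀ j : Fin m,
      (∑ j', max 0 ((C i (σ j) + mu (σ j)) - (C i j' + mu j'))) ≤ γ * a i → j ≤ l) :
    (∑ j, max 0 (-(C i j)
        - (-(γ * a i + ∑ j' ∈ Finset.filter (fun j' => j' ≤ l) Finset.univ,
              (C i (σ j') + mu (σ j'))) / ((l : ℕ) + 1))
        - mu j)) = γ * a i := by
  have hwater := sum_max_zero_sub_waterLevel_eq (d := fun j => C i j + mu j) hsort hl hlmax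
  rw [Fin.card_Iic, ← filter_ge_eq_Iic] at hwater
  push_cast at hwater
  refine Eq.trans (sum_congr rfl fun j _ => ?_) hwater
  congr 1
  ring

open OT in
theorem stmt4 {n m : ℕ} (hn : 0 < n) (hm : 0 < m)
    (a : Fin n → ℝ) (ha : ∀ i, 0 ≤ a i) (ha1 : ∑ i, a i = 1)
    (C : Matrix (Fin n) (Fin m) ℝ) (hC : ∀ i j, 0 ≤ C i j)
    (γ : ℝ) (hγ : 0 < γ) (i : Fin n) (mu : Fin m → ℝ)
    (σ : Equiv.Perm (Fin m))
    (hsort : Monotone (fun j : Fin m => C i (σ j) + mu (σ j)))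
    (l : Fin m)
    (hl : (∑ j, max 0 ((C i (σ l) + mu (σ l)) - (C i j + mu j))) ≤ γ * a i)
    (hlmax : ∀ j : Fin m,
      (∑ j', max 0 ((C i (σ j) + mu (σ j)) - (C i j' + mu j'))) ≤ γ * a i → j ≤ l) :
    (∑ j, max 0 (-(C i j)
        - (-(γ * a i + ∑ j' ∈ Finset.filter (fun j' => j' ≤ l) Finset.univ,
              (C i (σ j') + mu (σ j'))) / ((l : ℕ) + 1))
        - mu j)) = γ * a i :=
  stmt4_general a C γ i mu σ hsort l hl hlmax
end
end

section
/- Let (λ*, μ*) maximize φ over ℝⁿ × ℝᵐ and let λ ∈ ℝⁿ, μ ∈ ℝᵐ satisfy ‖(λ, μ) − (λ*, μ*)‖_∞ ≤ 4R (as holds for the iterates of the Euclidean Sinkhorn–Knopp algorithm with R = ‖C‖_∞ + (γ / min{n, m}) · (1 − max{max_i a_i, max_j b_j})). Then, with X = X(λ, μ), it holds that φ(λ*, μ*) − φ(λ, μ) ≤ 4R √(n + m) (‖X 1_m − a‖₂ + ‖Xᵀ 1_n − b‖₂). -/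
open Finset MeasureTheory

noncomputable section

lemma ptwise (s t : ℝ) : (max 0 t)^2 - 2 * (max 0 t) * (t - s) ≤ (max 0 s)^2 := by
  rcases le_or_gt t 0 with h | h
  · rw [max_eq_left h]; nlinarith [sq_nonneg (max 0 s)]
  · rw [max_eq_right h.le]
    have h1 : s ≤ max 0 s := le_max_right 0 s
    have h2 : 0 ≤ max 0 s := le_max_left 0 s
    nlinarith [sq_nonneg (max 0 s - t)]

lemma ptwise2 (γ s t u : ℝ) (hγ : 0 < γ) (hu : t - s = u) :
    (max 0 t)^2 - 2*γ*(max 0 t / γ * u) ≤ (max 0 s)^2 := by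
  have h : 2*γ*(max 0 t / γ * u) = 2 * max 0 t * u := by
    field_simp
  rw [h, ← hu]; exact ptwise s t

lemma cs_bound {k : ℕ} (d g : Fin k → ℝ) (R : ℝ) (hR : 0 ≤ R) (hd : ∀ i, |d i| ≤ R) :
    ∑ i, d i * g i ≤ R * Real.sqrt k * Real.sqrt (∑ i, g i ^ 2) := by
  have h1 := Real.sum_mul_le_sqrt_mul_sqrt Finset.univ d g
  have h2 : Real.sqrt (∑ i, d i ^ 2) ≤ R * Real.sqrt k := by
    have hsum : ∑ i : Fin k, d i ^ 2 ≤ (k : ℝ) * R ^ 2 := by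
      calc ∑ i : Fin k, d i ^ 2 ≤ ∑ _i : Fin k, R ^ 2 := by
            refine Finset.sum_le_sum fun i _ => ?_
            have := hd i
            nlinarith [abs_nonneg (d i), sq_abs (d i)]
        _ = (k : ℝ) * R ^ 2 := by simp [mul_comm]
    calc Real.sqrt (∑ i, d i ^ 2) ≤ Real.sqrt ((k : ℝ) * R ^ 2) := Real.sqrt_le_sqrt hsum
      _ = R * Real.sqrt k := by
          rw [Real.sqrt_mul (Nat.cast_nonneg k), Real.sqrt_sq hR]; ring
  calc ∑ i, d i * g i ≤ Real.sqrt (∑ i, d i ^ 2) * Real.sqrt (∑ i, g i ^ 2) := h1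
    _ ≤ R * Real.sqrt k * Real.sqrt (∑ i, g i ^ 2) :=
        mul_le_mul_of_nonneg_right h2 (Real.sqrt_nonneg _)

open OT in
theorem stmt8 {n m : ℕ} (hn : 0 < n) (hm : 0 < m)
    (a : Fin n → ℝ) (b : Fin m → ℝ) (ha : ∀ i, 0 ≤ a i) (ha1 : ∑ i, a i = 1)
    (hb : ∀ j, 0 ≤ b j) (hb1 : ∑ j, b j = 1)
    (C : Matrix (Fin n) (Fin m) ℝ) (hC : ∀ i j, 0 ≤ C i j)
    (γ : ℝ) (hγ : 0 < γ)
    (lamS : Fin n → ℝ) (muS : Fin m → ℝ)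
    (hopt : ∀ (l : Fin n → ℝ) (u : Fin m → ℝ), phi C γ a b l u ≤ phi C γ a b lamS muS)
    (lam : Fin n → ℝ) (mu : Fin m → ℝ)
    (hclose : (∀ i, |lam i - lamS i| ≤ 4 * Rbound C γ a b) ∧
      (∀ j, |mu j - muS j| ≤ 4 * Rbound C γ a b)) :
    phi C γ a b lamS muS - phi C γ a b lam mu ≤
      4 * Rbound C γ a b * Real.sqrt ((n : ℝ) + m) *
        (Real.sqrt (∑ i, (rowSum (plan C γ lam mu) i - a i) ^ 2) +
          Real.sqrt (∑ j, (colSum (plan C γ lam mu) j - b j) ^ 2)) := by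
  set R4 := 4 * Rbound C γ a b with hR4def
  set X := plan C γ lam mu with hX
  set d : Fin n → ℝ := fun i => lamS i - lam i with hd
  set e : Fin m → ℝ := fun j => muS j - mu j with he
  have hR4 : 0 ≤ R4 := le_trans (abs_nonneg _) (hclose.1 ⟨0, hn⟩)
  have hdabs : ∀ i, |d i| ≤ R4 := fun i => by
    rw [hd]; simpa [abs_sub_comm] using hclose.1 i
  have heabs : ∀ j, |e j| ≤ R4 := fun j => by
    rw [he]; simpa [abs_sub_comm] using hclose.2 j
  -- the double-sum inequality from pointwise concavity
  have hsum : (∑ i, ∑ j, (max 0 (-(C i j) - lam i - mu j))^2)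
      - 2*γ * (∑ i, ∑ j, X i j * (d i + e j))
      ≤ ∑ i, ∑ j, (max 0 (-(C i j) - lamS i - muS j))^2 := by
    rw [Finset.mul_sum, ← Finset.sum_sub_distrib]
    refine Finset.sum_le_sum fun i _ => ?_
    rw [Finset.mul_sum, ← Finset.sum_sub_distrib]
    refine Finset.sum_le_sum fun j _ => ?_
    have : X i j = max 0 (-(C i j) - lam i - mu j) / γ := rfl
    rw [this]
    exact ptwise2 γ _ _ _ hγ (by simp [hd, he]; ring)
  -- rewrite the mixed sum
  have hswap : ∑ i, ∑ j, X i j * (d i + e j)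
      = ∑ i, d i * rowSum X i + ∑ j, e j * colSum X j := by
    simp_rw [mul_add, Finset.sum_add_distrib]
    congr 1
    · simp_rw [rowSum, Finset.mul_sum]
      exact Finset.sum_congr rfl fun i _ => Finset.sum_congr rfl fun j _ => mul_comm _ _
    · rw [Finset.sum_comm]
      simp_rw [colSum, Finset.mul_sum]
      exact Finset.sum_congr rfl fun j _ => Finset.sum_congr rfl fun i _ => mul_comm _ _
  set SA := ∑ i, ∑ j, (max 0 (-(C i j) - lamS i - muS j))^2 with hSA
  set SB := ∑ i, ∑ j, (max 0 (-(C i j) - lam i - mu j))^2 with hSB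
  set S := ∑ i, d i * rowSum X i + ∑ j, e j * colSum X j with hS
  have hsum' : SB - 2*γ*S ≤ SA := hswap ▸ hsum
  have hmono : -(1/(2*γ)) * SA ≤ -(1/(2*γ)) * (SB - 2*γ*S) := by
    apply mul_le_mul_of_nonpos_left hsum'
    have : 0 < 1/(2*γ) := by positivity
    linarith
  have hid : -(1/(2*γ)) * (SB - 2*γ*S) = -(1/(2*γ)) * SB + S := by
    field_simp
    ring
  have key : phi C γ a b lamS muS - phi C γ a b lam mu
      ≤ ∑ i, d i * (rowSum X i - a i) + ∑ j, e j * (colSum X j - b j) := by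
    have hphiS : phi C γ a b lamS muS = -(1/(2*γ)) * SA - (∑ i, lamS i * a i) - (∑ j, muS j * b j) := rfl
    have hphi : phi C γ a b lam mu = -(1/(2*γ)) * SB - (∑ i, lam i * a i) - (∑ j, mu j * b j) := rfl
    have hda : ∑ i, d i * (rowSum X i - a i)
        = ∑ i, d i * rowSum X i - (∑ i, lamS i * a i - ∑ i, lam i * a i) := by
      rw [← Finset.sum_sub_distrib, ← Finset.sum_sub_distrib]
      exact Finset.sum_congr rfl fun i _ => by simp [hd]; ring
    have hdb : ∑ j, e j * (colSum X j - b j)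
        = ∑ j, e j * colSum X j - (∑ j, muS j * b j - ∑ j, mu j * b j) := by
      rw [← Finset.sum_sub_distrib, ← Finset.sum_sub_distrib]
      exact Finset.sum_congr rfl fun j _ => by simp [he]; ring
    rw [hphiS, hphi, hda, hdb]
    have := hmono.trans_eq hid
    rw [hS] at this
    linarith
  -- Cauchy–Schwarz bounds
  have hnm : Real.sqrt (n : ℝ) ≤ Real.sqrt ((n : ℝ) + m) := by
    apply Real.sqrt_le_sqrt
    have : (0:ℝ) ≤ (m:ℝ) := Nat.cast_nonneg m
    linarith
  have hmm : Real.sqrt (m : ℝ) ≤ Real.sqrt ((n : ℝ) + m) := by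
    apply Real.sqrt_le_sqrt
    have : (0:ℝ) ≤ (n:ℝ) := Nat.cast_nonneg n
    linarith
  have hA : ∑ i, d i * (rowSum X i - a i)
      ≤ R4 * Real.sqrt ((n : ℝ) + m) * Real.sqrt (∑ i, (rowSum X i - a i) ^ 2) := by
    refine (cs_bound d (fun i => rowSum X i - a i) R4 hR4 hdabs).trans ?_
    apply mul_le_mul_of_nonneg_right _ (Real.sqrt_nonneg _)
    exact mul_le_mul_of_nonneg_left hnm hR4
  have hB : ∑ j, e j * (colSum X j - b j)
      ≤ R4 * Real.sqrt ((n : ℝ) + m) * Real.sqrt (∑ j, (colSum X j - b j) ^ 2) := by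
    refine (cs_bound e (fun j => colSum X j - b j) R4 hR4 heabs).trans ?_
    apply mul_le_mul_of_nonneg_right _ (Real.sqrt_nonneg _)
    exact mul_le_mul_of_nonneg_left hmm hR4
  calc phi C γ a b lamS muS - phi C γ a b lam mu
      ≤ ∑ i, d i * (rowSum X i - a i) + ∑ j, e j * (colSum X j - b j) := key
    _ ≤ R4 * Real.sqrt ((n : ℝ) + m) * Real.sqrt (∑ i, (rowSum X i - a i) ^ 2)
        + R4 * Real.sqrt ((n : ℝ) + m) * Real.sqrt (∑ j, (colSum X j - b j) ^ 2) := by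
        linarith
    _ = R4 * Real.sqrt ((n : ℝ) + m) *
        (Real.sqrt (∑ i, (rowSum X i - a i) ^ 2) + Real.sqrt (∑ j, (colSum X j - b j) ^ 2)) := by
        ring
end
end

section
/- Let A : ℝ^{n×m} → ℝ^{n+m} be the linear operator A[X] = (X 1_m, Xᵀ 1_n). Then its operator norm with respect to the Euclidean norms satisfies ‖A‖_{2,2} := sup_{‖X‖₂ = 1} ‖A[X]‖₂ = √(n + m), where ‖X‖₂² = Σ_{i,j} x_{ij}² and the norm on ℝ^{n+m} is the Euclidean norm. -/
open Finset MeasureTheory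

noncomputable section

open OT in
theorem stmt12 {n m : ℕ} (hn : 0 < n) (hm : 0 < m) :
    IsLUB {v : ℝ | ∃ X : Matrix (Fin n) (Fin m) ℝ, nsq X = 1 ∧
        v = Real.sqrt ((∑ i, (rowSum X i) ^ 2) + ∑ j, (colSum X j) ^ 2)}
      (Real.sqrt ((n : ℝ) + m)) := by
  have hn' : (0:ℝ) < n := by exact_mod_cast hn
  have hm' : (0:ℝ) < m := by exact_mod_cast hm
  have hnm : (0:ℝ) < (n:ℝ) * m := by positivity
  apply IsGreatest.isLUB
  constructor
  · -- membership: witness constant matrix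
    set Y : Matrix (Fin n) (Fin m) ℝ := fun _ _ => 1 / Real.sqrt ((n:ℝ) * m) with hY
    refine ⟨Y, ?_, ?_⟩
    · simp only [nsq, hY, div_pow, one_pow, Real.sq_sqrt hnm.le, Finset.sum_const,
        Finset.card_univ, Fintype.card_fin, nsmul_eq_mul]
      field_simp
    · have hrow : ∀ i : Fin n, rowSum Y i
          = m / Real.sqrt ((n:ℝ) * m) := by
        intro i
        simp [rowSum, hY, Finset.sum_const, div_eq_mul_inv, mul_comm]
      have hcol : ∀ j : Fin m, colSum Y j
          = n / Real.sqrt ((n:ℝ) * m) := by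
        intro j
        simp [colSum, hY, Finset.sum_const, div_eq_mul_inv, mul_comm]
      have : (∑ i : Fin n, (rowSum Y i) ^ 2)
          + ∑ j : Fin m, (colSum Y j) ^ 2
          = (n:ℝ) + m := by
        simp only [hrow, hcol, Finset.sum_const, Finset.card_univ, Fintype.card_fin,
          nsmul_eq_mul, div_pow, Real.sq_sqrt hnm.le]
        field_simp
        ring
      rw [this]
  · -- upper bound
    rintro v ⟨X, hX, rfl⟩
    apply Real.sqrt_le_sqrt
    have h1 : (∑ i, (rowSum X i) ^ 2) ≤ (m:ℝ) * nsq X := by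
      rw [nsq, Finset.mul_sum]
      apply Finset.sum_le_sum
      intro i _
      have := sq_sum_le_card_mul_sum_sq (s := Finset.univ) (f := fun j => X i j)
      simpa [rowSum, Fintype.card_fin] using this
    have h2 : (∑ j, (colSum X j) ^ 2) ≤ (n:ℝ) * nsq X := by
      have hns : nsq X = ∑ j, ∑ i, (X i j) ^ 2 := by
        rw [nsq]; exact Finset.sum_comm
      rw [hns, Finset.mul_sum]
      apply Finset.sum_le_sum
      intro j _
      have := sq_sum_le_card_mul_sum_sq (s := Finset.univ) (f := fun i => X i j)
      simpa [colSum, Fintype.card_fin] using this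
    rw [hX] at h1 h2
    linarith
end
end

section
/- (Strong duality at the optimum) If (λ*, μ*) ∈ ℝⁿ × ℝᵐ maximizes φ over ℝⁿ × ℝᵐ, then the plan X* = X(λ*, μ*) satisfies X* 1_m = a and X*ᵀ 1_n = b (so X* ∈ U(a, b)), f(X*) = φ(λ*, μ*), and X* is the unique minimizer of f over U(a, b). -/
open Finset MeasureTheory

noncomputable section

private lemma keyA' (s t : ℝ) : (max 0 (s - t))^2 ≤ (max 0 s)^2 - 2*t*(max 0 s) + t^2 := by
  rcases le_total (s - t) 0 with h | h
  · rw [max_eq_left h]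
    rcases le_total s 0 with hs | hs
    · rw [max_eq_left hs]; nlinarith
    · rw [max_eq_right hs]; nlinarith
  · rw [max_eq_right h]
    rcases le_total s 0 with hs | hs
    · rw [max_eq_left hs]; nlinarith
    · rw [max_eq_right hs]; nlinarith

private lemma keyC' (γ : ℝ) (hγ : 0 < γ) (d y : ℝ) (hy : 0 ≤ y) :
    d * (max 0 (-d) / γ) + γ/2 * (max 0 (-d)/γ)^2 + γ/2 * (y - max 0 (-d)/γ)^2
      ≤ d*y + γ/2*y^2 := by
  rcases le_total d 0 with h | h
  · rw [max_eq_right (by linarith)]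
    apply le_of_eq
    field_simp
    ring
  · rw [max_eq_left (by linarith)]
    simp only [zero_div]
    nlinarith [mul_nonneg h hy]

private lemma keyB' (γ : ℝ) (hγ : 0 < γ) (c l u : ℝ) :
    c * (max 0 (-c - l - u)/γ) + γ/2 * (max 0 (-c - l - u)/γ)^2
      = -(1/(2*γ)) * (max 0 (-c - l - u))^2 - l * (max 0 (-c - l - u)/γ)
        - u * (max 0 (-c - l - u)/γ) := by
  rcases le_total (-c - l - u) 0 with h | h
  · rw [max_eq_left h]; simp
  · rw [max_eq_right h]; field_simp; ring

private lemma sum_update_split' {N : ℕ} (F : Fin N → ℝ → ℝ) (g : Fin N → ℝ) (i : Fin N) (v : ℝ) :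
    ∑ i', F i' (Function.update g i v i') = ∑ i', F i' (g i') + (F i v - F i (g i)) := by
  have h : ∀ i' ∈ Finset.univ.erase i, F i' (Function.update g i v i') = F i' (g i') :=
    fun i' hi' => by rw [Function.update_of_ne (Finset.mem_erase.mp hi').1]
  rw [← Finset.add_sum_erase _ _ (Finset.mem_univ i),
    ← Finset.add_sum_erase _ (fun i' => F i' (g i')) (Finset.mem_univ i),
    Finset.sum_congr rfl h, Function.update_self]
  ring

private lemma marg' {N M : ℕ} (γ : ℝ) (hγ : 0 < γ) (K : Fin N → Fin M → ℝ) (α : Fin N → ℝ)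
    (lam : Fin N → ℝ)
    (hopt : ∀ lam' : Fin N → ℝ,
      -(1/(2*γ)) * (∑ i, ∑ j, (max 0 (K i j - lam' i))^2) - ∑ i, lam' i * α i ≤
      -(1/(2*γ)) * (∑ i, ∑ j, (max 0 (K i j - lam i))^2) - ∑ i, lam i * α i)
    (i : Fin N) : (∑ j, max 0 (K i j - lam i)) / γ = α i := by
  set Q : ℝ := ∑ j, max 0 (K i j - lam i) with hQ
  set d : ℝ := Q / γ - α i with hd
  have key : ∀ t : ℝ, t * d * (2*γ) ≤ (M : ℝ) * t^2 := by
    intro t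
    have h := hopt (Function.update lam i (lam i + t))
    have hsplit : ∑ i', ∑ j, (max 0 (K i' j - Function.update lam i (lam i + t) i'))^2
        = ∑ i', ∑ j, (max 0 (K i' j - lam i'))^2
          + ((∑ j, (max 0 (K i j - lam i - t))^2) - ∑ j, (max 0 (K i j - lam i))^2) := by
      rw [sum_update_split' (fun i' v => ∑ j, (max 0 (K i' j - v))^2) lam i (lam i + t)]
      congr 2
      exact Finset.sum_congr rfl fun j _ => by
        rw [show K i j - (lam i + t) = K i j - lam i - t by ring]
    have hsplit2 : ∑ i', Function.update lam i (lam i + t) i' * α i'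
        = (∑ i', lam i' * α i') + t * α i := by
      rw [sum_update_split' (fun i' v => v * α i') lam i (lam i + t)]; ring
    rw [hsplit, hsplit2] at h
    set T : ℝ := ∑ i', ∑ j, (max 0 (K i' j - lam i'))^2 with hT
    set D1 : ℝ := ∑ j, (max 0 (K i j - lam i - t))^2 with hD1
    set D0 : ℝ := ∑ j, (max 0 (K i j - lam i))^2 with hD0
    have e : -(1/(2*γ)) * (T + (D1 - D0)) = -(1/(2*γ)) * T + (-(1/(2*γ)) * (D1 - D0)) := by ring
    have e2 : -(1/(2*γ)) * (D1 - D0) = (D0 - D1)/(2*γ) := by ring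
    have h'' : (D0 - D1)/(2*γ) ≤ t * α i := by linarith
    rw [div_le_iff₀ (by positivity : (0:ℝ) < 2*γ)] at h''
    have hA : D1 ≤ ∑ j, ((max 0 (K i j - lam i))^2 - 2*t*(max 0 (K i j - lam i)) + t^2) :=
      Finset.sum_le_sum fun j _ => keyA' (K i j - lam i) t
    have hsum : ∑ j, ((max 0 (K i j - lam i))^2 - 2*t*(max 0 (K i j - lam i)) + t^2)
        = D0 - 2*t*Q + (M:ℝ)*t^2 := by
      rw [Finset.sum_add_distrib, Finset.sum_sub_distrib, ← Finset.mul_sum,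
        Finset.sum_const, Finset.card_univ, Fintype.card_fin, nsmul_eq_mul]
    have e3 : t*d*(2*γ) = 2*t*Q - t*α i*(2*γ) := by
      rw [hd]; field_simp
    linarith [hA, hsum, h'', e3]
  set ε : ℝ := γ / ((M:ℝ)+1) with hε
  have hεpos : 0 < ε := by positivity
  have hMε : ε * (M:ℝ) ≤ γ := by
    rw [hε, div_mul_eq_mul_div, div_le_iff₀ (by positivity : (0:ℝ) < (M:ℝ)+1)]
    nlinarith [hγ.le]
  have hk := key (ε*d)
  have h2 : d^2 ≤ 0 := by
    nlinarith [mul_nonneg (sq_nonneg d) hεpos.le, mul_pos hεpos hγ, sq_nonneg d]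
  have h3 : d = 0 := by
    have := le_antisymm h2 (sq_nonneg d)
    exact pow_eq_zero_iff (by norm_num) |>.mp this
  rw [hd] at h3; linarith

open OT in
theorem stmt15 {n m : ℕ} (hn : 0 < n) (hm : 0 < m)
    (a : Fin n → ℝ) (b : Fin m → ℝ) (ha : ∀ i, 0 ≤ a i) (ha1 : ∑ i, a i = 1)
    (hb : ∀ j, 0 ≤ b j) (hb1 : ∑ j, b j = 1)
    (C : Matrix (Fin n) (Fin m) ℝ) (hC : ∀ i j, 0 ≤ C i j)
    (γ : ℝ) (hγ : 0 < γ)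
    (lamS : Fin n → ℝ) (muS : Fin m → ℝ)
    (hopt : ∀ (lam : Fin n → ℝ) (mu : Fin m → ℝ),
      phi C γ a b lam mu ≤ phi C γ a b lamS muS) :
    (∀ i, rowSum (plan C γ lamS muS) i = a i) ∧
    (∀ j, colSum (plan C γ lamS muS) j = b j) ∧
    memU a b (plan C γ lamS muS) ∧
    fobj C γ (plan C γ lamS muS) = phi C γ a b lamS muS ∧
    (∀ Y : Matrix (Fin n) (Fin m) ℝ, memU a b Y →
      fobj C γ (plan C γ lamS muS) ≤ fobj C γ Y) ∧
    (∀ Y : Matrix (Fin n) (Fin m) ℝ, memU a b Y →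
      fobj C γ Y = fobj C γ (plan C γ lamS muS) → Y = plan C γ lamS muS) := by
  have hplan : ∀ i j, plan C γ lamS muS i j = max 0 (-(C i j) - lamS i - muS j) / γ :=
    fun _ _ => rfl
  -- phi rewritten for row perturbations
  have ephi : ∀ lam : Fin n → ℝ, phi C γ a b lam muS
      = (-(1/(2*γ)) * (∑ i, ∑ j, (max 0 ((-(C i j) - muS j) - lam i))^2)
          - ∑ i, lam i * a i) - ∑ j, muS j * b j := by
    intro lam
    unfold phi
    have h' : ∀ i j, -(C i j) - lam i - muS j = (-(C i j) - muS j) - lam i := fun i j => by ring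
    simp only [h']
  have ephi2 : ∀ mu : Fin m → ℝ, phi C γ a b lamS mu
      = (-(1/(2*γ)) * (∑ j, ∑ i, (max 0 ((-(C i j) - lamS i) - mu j))^2)
          - ∑ j, mu j * b j) - ∑ i, lamS i * a i := by
    intro mu
    unfold phi
    rw [Finset.sum_comm]
    ring
  have hrow : ∀ i, rowSum (plan C γ lamS muS) i = a i := by
    intro i
    have h := marg' γ hγ (fun i j => -(C i j) - muS j) a lamS (fun lam' => by
      have h0 := hopt lam' muS
      rw [ephi lam', ephi lamS] at h0
      linarith) i
    unfold rowSum
    simp only [hplan]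
    rw [← h, Finset.sum_div]
    refine Finset.sum_congr rfl fun j _ => ?_
    rw [show -C i j - muS j - lamS i = -C i j - lamS i - muS j from by ring]
  have hcol : ∀ j, colSum (plan C γ lamS muS) j = b j := by
    intro j
    have h := marg' γ hγ (fun j i => -(C i j) - lamS i) b muS (fun mu' => by
      have h0 := hopt lamS mu'
      rw [ephi2 mu', ephi2 muS] at h0
      linarith) j
    unfold colSum
    simp only [hplan]
    rw [← h, Finset.sum_div]
  have hXnn : ∀ i j, 0 ≤ plan C γ lamS muS i j := fun i j => by
    rw [hplan i j]; positivity
  have hXU : memU a b (plan C γ lamS muS) := ⟨hXnn, hrow, hcol⟩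
  -- strong duality value equality
  have hf : fobj C γ (plan C γ lamS muS)
      = ∑ i, ∑ j, (C i j * plan C γ lamS muS i j + γ/2 * (plan C γ lamS muS i j)^2) := by
    unfold fobj inn nsq
    rw [Finset.mul_sum, ← Finset.sum_add_distrib]
    exact Finset.sum_congr rfl fun i _ => by
      rw [Finset.mul_sum, ← Finset.sum_add_distrib]
  have hp : phi C γ a b lamS muS
      = ∑ i, ∑ j, (-(1/(2*γ)) * (max 0 (-(C i j) - lamS i - muS j))^2
          - lamS i * plan C γ lamS muS i j - muS j * plan C γ lamS muS i j) := by
    unfold phi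
    have h1 : ∑ i, lamS i * a i = ∑ i, ∑ j, lamS i * plan C γ lamS muS i j := by
      refine Finset.sum_congr rfl fun i _ => ?_
      rw [← hrow i]; unfold rowSum; rw [Finset.mul_sum]
    have h2 : ∑ j, muS j * b j = ∑ i, ∑ j, muS j * plan C γ lamS muS i j := by
      rw [show (∑ j, muS j * b j) = ∑ j, ∑ i, muS j * plan C γ lamS muS i j from
        Finset.sum_congr rfl fun j _ => by rw [← hcol j]; unfold colSum; rw [Finset.mul_sum]]
      exact Finset.sum_comm
    rw [h1, h2, Finset.mul_sum, ← Finset.sum_sub_distrib, ← Finset.sum_sub_distrib]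
    refine Finset.sum_congr rfl fun i _ => ?_
    rw [Finset.mul_sum, ← Finset.sum_sub_distrib, ← Finset.sum_sub_distrib]
  have hfp : fobj C γ (plan C γ lamS muS) = phi C γ a b lamS muS := by
    rw [hf, hp]
    refine Finset.sum_congr rfl fun i _ => Finset.sum_congr rfl fun j _ => ?_
    rw [hplan i j]
    exact keyB' γ hγ (C i j) (lamS i) (muS j)
  -- Lagrangian sums
  have hg : ∀ Z : Matrix (Fin n) (Fin m) ℝ, (∀ i, rowSum Z i = a i) → (∀ j, colSum Z j = b j) →
      ∑ i, ∑ j, ((C i j + lamS i + muS j) * Z i j + γ/2 * (Z i j)^2)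
      = fobj C γ Z + (∑ i, lamS i * a i) + (∑ j, muS j * b j) := by
    intro Z h1 h2
    have e : ∀ i j, (C i j + lamS i + muS j) * Z i j + γ/2 * (Z i j)^2
        = (C i j * Z i j + γ/2 * (Z i j)^2) + lamS i * Z i j + muS j * Z i j :=
      fun i j => by ring
    have elam : ∑ i, ∑ j, lamS i * Z i j = ∑ i, lamS i * a i :=
      Finset.sum_congr rfl fun i _ => by rw [← Finset.mul_sum, ← h1 i]; rfl
    have emu : ∑ i, ∑ j, muS j * Z i j = ∑ j, muS j * b j := by
      rw [Finset.sum_comm]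
      exact Finset.sum_congr rfl fun j _ => by rw [← Finset.mul_sum, ← h2 j]; rfl
    have en : ∑ i, ∑ j, γ/2 * (Z i j)^2 = γ/2 * nsq Z := by
      unfold nsq
      rw [Finset.mul_sum]
      exact Finset.sum_congr rfl fun i _ => (Finset.mul_sum _ _ _).symm
    simp only [e, Finset.sum_add_distrib]
    rw [elam, emu, en]
    unfold fobj inn
    ring
  have hineq : ∀ Y : Matrix (Fin n) (Fin m) ℝ, memU a b Y →
      fobj C γ (plan C γ lamS muS) + γ/2 * (∑ i, ∑ j, (Y i j - plan C γ lamS muS i j)^2)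
        ≤ fobj C γ Y := by
    rintro Y ⟨hY0, hY1, hY2⟩
    have hkey : ∑ i, ∑ j, (((C i j + lamS i + muS j) * plan C γ lamS muS i j
          + γ/2 * (plan C γ lamS muS i j)^2) + γ/2 * (Y i j - plan C γ lamS muS i j)^2)
        ≤ ∑ i, ∑ j, ((C i j + lamS i + muS j) * Y i j + γ/2 * (Y i j)^2) := by
      refine Finset.sum_le_sum fun i _ => Finset.sum_le_sum fun j _ => ?_
      have hc := keyC' γ hγ (C i j + lamS i + muS j) (Y i j) (hY0 i j)
      rw [show -(C i j + lamS i + muS j) = -(C i j) - lamS i - muS j by ring] at hc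
      rw [hplan i j]
      linarith
    have esplit : ∑ i, ∑ j, (((C i j + lamS i + muS j) * plan C γ lamS muS i j
          + γ/2 * (plan C γ lamS muS i j)^2) + γ/2 * (Y i j - plan C γ lamS muS i j)^2)
        = (∑ i, ∑ j, ((C i j + lamS i + muS j) * plan C γ lamS muS i j
            + γ/2 * (plan C γ lamS muS i j)^2))
          + γ/2 * (∑ i, ∑ j, (Y i j - plan C γ lamS muS i j)^2) := by
      simp only [Finset.sum_add_distrib]
      congr 1
      rw [Finset.mul_sum]
      exact Finset.sum_congr rfl fun i _ => (Finset.mul_sum _ _ _).symm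
    rw [esplit, hg _ hrow hcol, hg Y hY1 hY2] at hkey
    linarith
  refine ⟨hrow, hcol, hXU, hfp, fun Y hY => ?_, fun Y hY hfy => ?_⟩
  · have h := hineq Y hY
    have hS : 0 ≤ ∑ i, ∑ j, (Y i j - plan C γ lamS muS i j)^2 :=
      Finset.sum_nonneg fun i _ => Finset.sum_nonneg fun j _ => sq_nonneg _
    nlinarith
  · have h := hineq Y hY
    have hS : 0 ≤ ∑ i, ∑ j, (Y i j - plan C γ lamS muS i j)^2 :=
      Finset.sum_nonneg fun i _ => Finset.sum_nonneg fun j _ => sq_nonneg _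
    have hS0 : ∑ i, ∑ j, (Y i j - plan C γ lamS muS i j)^2 = 0 := by
      by_contra hne
      have hpos : 0 < ∑ i, ∑ j, (Y i j - plan C γ lamS muS i j)^2 :=
        lt_of_le_of_ne hS (Ne.symm hne)
      nlinarith
    funext i j
    have h1 := (Finset.sum_eq_zero_iff_of_nonneg
      (fun i (_ : i ∈ Finset.univ) => Finset.sum_nonneg
        fun j _ => sq_nonneg (Y i j - plan C γ lamS muS i j))).mp hS0 i (Finset.mem_univ i)
    have h2 := (Finset.sum_eq_zero_iff_of_nonneg
      (fun j (_ : j ∈ Finset.univ) => sq_nonneg (Y i j - plan C γ lamS muS i j))).mp h1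
      j (Finset.mem_univ j)
    have := pow_eq_zero_iff (n := 2) (by norm_num) |>.mp h2
    linarith [this]
end
end

section
/- (Primal error decomposition) For every matrix X_k ∈ ℝ^{n×m} with nonnegative entries, every (λ_k, μ_k) ∈ ℝⁿ × ℝᵐ, and every X ∈ U(a, b), it holds that ⟨C, X⟩ ≤ min_{Y ∈ U(a,b)} ⟨C, Y⟩ + ⟨C, X − X_k⟩ + (f(X_k) − φ(λ_k, μ_k)) + γ/2. Consequently, if γ ≤ ε/3, f(X_k) − φ(λ_k, μ_k) ≤ ε/3 and ⟨C, X − X_k⟩ ≤ ε/3, then X is an ε-optimal feasible transport plan. -/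
open Finset MeasureTheory

noncomputable section

open OT

lemma inn_sub {n m : ℕ} (C X Z : Matrix (Fin n) (Fin m) ℝ) :
    inn C (X - Z) = inn C X - inn C Z := by
  simp [inn, Matrix.sub_apply, mul_sub, Finset.sum_sub_distrib]

lemma nsq_nonneg {n m : ℕ} (X : Matrix (Fin n) (Fin m) ℝ) : 0 ≤ nsq X := by
  apply Finset.sum_nonneg; intro i _; exact Finset.sum_nonneg fun j _ => sq_nonneg _

lemma nsq_le_one {n m : ℕ} (a : Fin n → ℝ) (b : Fin m → ℝ) (ha1 : ∑ i, a i = 1)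
    (Y : Matrix (Fin n) (Fin m) ℝ) (hY : memU a b Y) : nsq Y ≤ 1 := by
  obtain ⟨h0, hr, _⟩ := hY
  have hentry : ∀ i j, Y i j ≤ 1 := by
    intro i j
    have h1 : Y i j ≤ rowSum Y i :=
      Finset.single_le_sum (f := fun j => Y i j) (fun j _ => h0 i j) (Finset.mem_univ j)
    have h2 : a i ≤ ∑ i, a i := by
      apply Finset.single_le_sum (f := a) _ (Finset.mem_univ i)
      intro k _
      rw [← hr k]; exact Finset.sum_nonneg fun j _ => h0 k j
    rw [hr i] at h1; linarith [ha1 ▸ h2]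
  calc nsq Y ≤ ∑ i, ∑ j, Y i j := by
        apply Finset.sum_le_sum; intro i _
        apply Finset.sum_le_sum; intro j _
        nlinarith [h0 i j, hentry i j]
    _ = ∑ i, a i := by simp [← hr, rowSum]
    _ = 1 := ha1

lemma weak_duality {n m : ℕ} (a : Fin n → ℝ) (b : Fin m → ℝ)
    (C : Matrix (Fin n) (Fin m) ℝ) (γ : ℝ) (hγ : 0 < γ)
    (lam : Fin n → ℝ) (mu : Fin m → ℝ)
    (Y : Matrix (Fin n) (Fin m) ℝ) (hY : memU a b Y) :
    phi C γ a b lam mu ≤ fobj C γ Y := by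
  obtain ⟨h0, hr, hc⟩ := hY
  have h1 : ∑ i, lam i * a i = ∑ i, ∑ j, lam i * Y i j := by
    simp [← hr, rowSum, Finset.mul_sum]
  have h2 : ∑ j, mu j * b j = ∑ i, ∑ j, mu j * Y i j := by
    rw [Finset.sum_comm]
    simp [← hc, colSum, Finset.mul_sum]
  have key : fobj C γ Y - phi C γ a b lam mu =
      ∑ i, ∑ j, (C i j * Y i j + γ / 2 * (Y i j) ^ 2 + lam i * Y i j + mu j * Y i j
        + 1 / (2 * γ) * (max 0 (-(C i j) - lam i - mu j)) ^ 2) := by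
    have expand : ∑ i, ∑ j, (C i j * Y i j + γ / 2 * (Y i j) ^ 2 + lam i * Y i j + mu j * Y i j
        + 1 / (2 * γ) * (max 0 (-(C i j) - lam i - mu j)) ^ 2)
        = (∑ i, ∑ j, C i j * Y i j) + γ / 2 * (∑ i, ∑ j, (Y i j) ^ 2)
          + (∑ i, ∑ j, lam i * Y i j) + (∑ i, ∑ j, mu j * Y i j)
          + 1 / (2 * γ) * (∑ i, ∑ j, (max 0 (-(C i j) - lam i - mu j)) ^ 2) := by
      simp only [Finset.sum_add_distrib, Finset.mul_sum]
    rw [expand]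
    simp only [fobj, phi, inn, nsq, h1, h2]
    ring
  have hterm : ∀ i j, 0 ≤ C i j * Y i j + γ / 2 * (Y i j) ^ 2 + lam i * Y i j + mu j * Y i j
      + 1 / (2 * γ) * (max 0 (-(C i j) - lam i - mu j)) ^ 2 := by
    intro i j
    set s := max 0 (-(C i j) - lam i - mu j) with hs
    have hs0 : 0 ≤ s := le_max_left _ _
    have hst : -(C i j) - lam i - mu j ≤ s := le_max_right _ _
    have hy : 0 ≤ Y i j := h0 i j
    have hsq : 0 ≤ (γ * Y i j - s) ^ 2 := sq_nonneg _
    have hmul : 0 ≤ Y i j * (s - (-(C i j) - lam i - mu j)) :=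
      mul_nonneg hy (by linarith)
    have hexp : C i j * Y i j + γ / 2 * (Y i j) ^ 2 + lam i * Y i j + mu j * Y i j
        + 1 / (2 * γ) * s ^ 2
        = 1 / (2 * γ) * (γ * Y i j - s) ^ 2 + Y i j * (s - (-(C i j) - lam i - mu j)) := by
      field_simp; ring
    rw [hexp]
    have := mul_nonneg (le_of_lt (by positivity : (0:ℝ) < 1 / (2 * γ))) hsq
    linarith
  have : 0 ≤ fobj C γ Y - phi C γ a b lam mu := by
    rw [key]
    exact Finset.sum_nonneg fun i _ => Finset.sum_nonneg fun j _ => hterm i j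
  linarith

open OT in
theorem stmt16 {n m : ℕ} (hn : 0 < n) (hm : 0 < m)
    (a : Fin n → ℝ) (b : Fin m → ℝ) (ha : ∀ i, 0 ≤ a i) (ha1 : ∑ i, a i = 1)
    (hb : ∀ j, 0 ≤ b j) (hb1 : ∑ j, b j = 1)
    (C : Matrix (Fin n) (Fin m) ℝ) (hC : ∀ i j, 0 ≤ C i j)
    (γ : ℝ) (hγ : 0 < γ) :
    (∀ Xk : Matrix (Fin n) (Fin m) ℝ, (∀ i j, 0 ≤ Xk i j) →
      ∀ (lamk : Fin n → ℝ) (muk : Fin m → ℝ),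
      ∀ X : Matrix (Fin n) (Fin m) ℝ, memU a b X →
      ∀ Y : Matrix (Fin n) (Fin m) ℝ, memU a b Y →
        inn C X ≤ inn C Y + inn C (X - Xk) + (fobj C γ Xk - phi C γ a b lamk muk) + γ / 2) ∧
    (∀ ε : ℝ, 0 < ε → γ ≤ ε / 3 →
      ∀ Xk : Matrix (Fin n) (Fin m) ℝ, (∀ i j, 0 ≤ Xk i j) →
      ∀ (lamk : Fin n → ℝ) (muk : Fin m → ℝ),
        fobj C γ Xk - phi C γ a b lamk muk ≤ ε / 3 →
        ∀ X : Matrix (Fin n) (Fin m) ℝ, memU a b X → inn C (X - Xk) ≤ ε / 3 →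
          ∀ Y : Matrix (Fin n) (Fin m) ℝ, memU a b Y → inn C X ≤ inn C Y + ε) := by
  have main : ∀ Xk : Matrix (Fin n) (Fin m) ℝ, (∀ i j, 0 ≤ Xk i j) →
      ∀ (lamk : Fin n → ℝ) (muk : Fin m → ℝ),
      ∀ X : Matrix (Fin n) (Fin m) ℝ, memU a b X →
      ∀ Y : Matrix (Fin n) (Fin m) ℝ, memU a b Y →
        inn C X ≤ inn C Y + inn C (X - Xk) + (fobj C γ Xk - phi C γ a b lamk muk) + γ / 2 := by
    intro Xk hXk lamk muk X hX Y hY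
    have hwd := weak_duality a b C γ hγ lamk muk Y hY
    have hns := nsq_le_one a b ha1 Y hY
    have hnsk := nsq_nonneg Xk
    have hsub := inn_sub C X Xk
    have hfY : fobj C γ Y ≤ inn C Y + γ / 2 := by
      have : γ / 2 * nsq Y ≤ γ / 2 * 1 := by
        apply mul_le_mul_of_nonneg_left hns (by positivity)
      simp only [fobj]; linarith
    have hfk : inn C Xk ≤ fobj C γ Xk := by
      simp only [fobj]; nlinarith
    linarith
  refine ⟨main, ?_⟩
  intro ε hε hγε Xk hXk lamk muk hgap X hX hinn Y hY
  have := main Xk hXk lamk muk X hX Y hY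
  linarith
end
end

section
/- (Rounding onto the transport polytope, used in Algorithms 2 and 5) For every matrix X ∈ ℝ^{n×m} with nonnegative entries, there exists X̂ ∈ U(a, b) such that ‖X̂ − X‖₁ ≤ 2(‖X 1_m − a‖₁ + ‖Xᵀ 1_n − b‖₁), where ‖·‖₁ denotes the sum of absolute values of entries of a matrix or of a vector. Consequently, ⟨C, X̂⟩ ≤ ⟨C, X⟩ + 2 ‖C‖_∞ (‖X 1_m − a‖₁ + ‖Xᵀ 1_n − b‖₁). -/
open Finset MeasureTheory

noncomputable section

open OT in
theorem stmt19 {n m : ℕ} (hn : 0 < n) (hm : 0 < m)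
    (a : Fin n → ℝ) (b : Fin m → ℝ) (ha : ∀ i, 0 ≤ a i) (ha1 : ∑ i, a i = 1)
    (hb : ∀ j, 0 ≤ b j) (hb1 : ∑ j, b j = 1)
    (C : Matrix (Fin n) (Fin m) ℝ) (hC : ∀ i j, 0 ≤ C i j) :
    ∀ X : Matrix (Fin n) (Fin m) ℝ, (∀ i j, 0 ≤ X i j) →
      ∃ Xh : Matrix (Fin n) (Fin m) ℝ, memU a b Xh ∧
        l1m (Xh - X) ≤
          2 * ((∑ i, |rowSum X i - a i|) + ∑ j, |colSum X j - b j|) ∧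
        inn C Xh ≤ inn C X +
          2 * Cinf C * ((∑ i, |rowSum X i - a i|) + ∑ j, |colSum X j - b j|) := by
  intro X hX
  classical
  -- sup bound facts for C
  have hCtop : ∀ i j, C i j ≤ Cinf C := by
    intro i j
    have hbdd : BddAbove (Set.range fun p : Fin n × Fin m => C p.1 p.2) :=
      Set.Finite.bddAbove (Set.finite_range _)
    simpa [Cinf] using le_ciSup hbdd (⟨i, j⟩ : Fin n × Fin m)
  have hCinf0 : 0 ≤ Cinf C := le_trans (hC ⟨0, hn⟩ ⟨0, hm⟩) (hCtop _ _)
  have hr0 : ∀ i, 0 ≤ rowSum X i := fun i => Finset.sum_nonneg fun j _ => hX i j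
  -- first scaling: fix rows
  set F : Matrix (Fin n) (Fin m) ℝ := fun i j => min 1 (a i / rowSum X i) * X i j with hFdef
  have hsc0 : ∀ i, 0 ≤ min 1 (a i / rowSum X i) := fun i =>
    le_min zero_le_one (div_nonneg (ha i) (hr0 i))
  have hF0 : ∀ i j, 0 ≤ F i j := fun i j => mul_nonneg (hsc0 i) (hX i j)
  have hFleX : ∀ i j, F i j ≤ X i j := fun i j =>
    mul_le_of_le_one_left (hX i j) (min_le_left _ _)
  have hFrow : ∀ i, rowSum F i = min (rowSum X i) (a i) := by
    intro i
    have hrw : rowSum F i = min 1 (a i / rowSum X i) * rowSum X i := by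
      simp only [rowSum, hFdef]
      rw [← Finset.mul_sum]
    rw [hrw]
    rcases eq_or_lt_of_le (hr0 i) with h | h
    · rw [← h, mul_zero, min_eq_left (ha i)]
    · rw [min_mul_of_nonneg _ _ (hr0 i), one_mul, div_mul_cancel₀ _ h.ne']
  have hc0 : ∀ j, 0 ≤ colSum F j := fun j => Finset.sum_nonneg fun i _ => hF0 i j
  -- second scaling: fix columns
  set G : Matrix (Fin n) (Fin m) ℝ := fun i j => min 1 (b j / colSum F j) * F i j with hGdef
  have htc0 : ∀ j, 0 ≤ min 1 (b j / colSum F j) := fun j =>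
    le_min zero_le_one (div_nonneg (hb j) (hc0 j))
  have hG0 : ∀ i j, 0 ≤ G i j := fun i j => mul_nonneg (htc0 j) (hF0 i j)
  have hGleF : ∀ i j, G i j ≤ F i j := fun i j =>
    mul_le_of_le_one_left (hF0 i j) (min_le_left _ _)
  have hGcol : ∀ j, colSum G j = min (colSum F j) (b j) := by
    intro j
    have hrw : colSum G j = min 1 (b j / colSum F j) * colSum F j := by
      simp only [colSum, hGdef]
      rw [← Finset.mul_sum]
    rw [hrw]
    rcases eq_or_lt_of_le (hc0 j) with h | h
    · rw [← h, mul_zero, min_eq_left (hb j)]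
    · rw [min_mul_of_nonneg _ _ (hc0 j), one_mul, div_mul_cancel₀ _ h.ne']
  have hGrowF : ∀ i, rowSum G i ≤ rowSum F i := fun i =>
    Finset.sum_le_sum fun j _ => hGleF i j
  have hGrowa : ∀ i, rowSum G i ≤ a i := fun i =>
    (hGrowF i).trans ((hFrow i) ▸ min_le_right _ _)
  -- errors
  set errA : Fin n → ℝ := fun i => a i - rowSum G i with hEA
  set errB : Fin m → ℝ := fun j => b j - colSum G j with hEB
  have hA0 : ∀ i, 0 ≤ errA i := fun i => sub_nonneg.mpr (hGrowa i)
  have hB0 : ∀ j, 0 ≤ errB j := fun j => by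
    simp only [hEB]
    rw [hGcol j]
    exact sub_nonneg.mpr (min_le_right _ _)
  set s : ℝ := ∑ i, errA i with hs
  have hs0 : 0 ≤ s := Finset.sum_nonneg fun i _ => hA0 i
  set TG : ℝ := ∑ i, ∑ j, G i j with hTG
  have hsTG : s = 1 - TG := by
    simp only [hs, hEA, Finset.sum_sub_distrib, ha1, hTG]
    rfl
  have hTGcol : ∑ j, colSum G j = TG := by
    simp only [colSum, hTG]
    exact Finset.sum_comm
  have hsB : ∑ j, errB j = s := by
    simp only [hEB, Finset.sum_sub_distrib, hb1, hTGcol, hsTG]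
  -- the correction term sums
  have hcorr_row : ∀ i, ∑ j, errA i * errB j / s = errA i := by
    intro i
    rw [← Finset.sum_div, ← Finset.mul_sum, hsB]
    by_cases hz : s = 0
    · have h0 : errA i = 0 :=
        (Finset.sum_eq_zero_iff_of_nonneg (fun i _ => hA0 i)).mp hz i (Finset.mem_univ i)
      simp [h0]
    · rw [mul_div_assoc, div_self hz, mul_one]
  have hcorr_col : ∀ j, ∑ i, errA i * errB j / s = errB j := by
    intro j
    rw [← Finset.sum_div, ← Finset.sum_mul]
    by_cases hz : s = 0
    · have h0 : errB j = 0 := by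
        have := hsB.trans hz
        exact (Finset.sum_eq_zero_iff_of_nonneg (fun j _ => hB0 j)).mp this j (Finset.mem_univ j)
      simp [h0, ← hs, hz]
    · rw [← hs, mul_comm, mul_div_assoc, div_self hz, mul_one]
  -- the rounded matrix
  set Xh : Matrix (Fin n) (Fin m) ℝ := fun i j => G i j + errA i * errB j / s with hXh
  have hXhe : ∀ i j, Xh i j = G i j + errA i * errB j / s := fun i j => rfl
  refine ⟨Xh, ?_, ?_, ?_⟩
  · refine ⟨fun i j => (hXhe i j) ▸ add_nonneg (hG0 i j)
      (div_nonneg (mul_nonneg (hA0 i) (hB0 j)) hs0), ?_, ?_⟩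
    · intro i
      have : rowSum Xh i = ∑ j, (G i j + errA i * errB j / s) := rfl
      rw [this, Finset.sum_add_distrib, hcorr_row i]
      simp only [hEA, rowSum]
      ring
    · intro j
      have : colSum Xh j = ∑ i, (G i j + errA i * errB j / s) := rfl
      rw [this, Finset.sum_add_distrib, hcorr_col j]
      simp only [hEB, colSum]
      ring
  all_goals
  · -- common quantitative bounds
    have hGleX : ∀ i j, G i j ≤ X i j := fun i j => (hGleF i j).trans (hFleX i j)
    set Da : ℝ := ∑ i, |rowSum X i - a i| with hDa
    set Db : ℝ := ∑ j, |colSum X j - b j| with hDb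
    set TF : ℝ := ∑ i, ∑ j, F i j with hTF
    set TX : ℝ := ∑ i, ∑ j, X i j with hTX
    have hTXTF : TX - TF ≤ Da := by
      rw [hTX, hTF, hDa, ← Finset.sum_sub_distrib]
      refine Finset.sum_le_sum fun i _ => ?_
      have : (∑ j, X i j) - ∑ j, F i j = rowSum X i - rowSum F i := rfl
      rw [this, hFrow i]
      rcases le_total (rowSum X i) (a i) with h | h
      · rw [min_eq_left h]; simp [abs_nonneg]
      · rw [min_eq_right h]; exact le_abs_self _
    have hTF1 : 1 - TF ≤ Da := by
      rw [hTF, hDa, ← ha1, ← Finset.sum_sub_distrib]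
      refine Finset.sum_le_sum fun i _ => ?_
      have : a i - ∑ j, F i j = a i - rowSum F i := rfl
      rw [this, hFrow i]
      rcases le_total (rowSum X i) (a i) with h | h
      · rw [min_eq_left h, abs_sub_comm]; exact le_abs_self _
      · rw [min_eq_right h]; simp [abs_nonneg]
    have hcFX : ∀ j, colSum F j ≤ colSum X j := fun j =>
      Finset.sum_le_sum fun i _ => hFleX i j
    have hTFTG : TF - TG ≤ Db := by
      rw [hTF, hTG, hDb, Finset.sum_comm (f := fun i j => F i j),
        Finset.sum_comm (f := fun i j => G i j), ← Finset.sum_sub_distrib]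
      refine Finset.sum_le_sum fun j _ => ?_
      have : (∑ i, F i j) - ∑ i, G i j = colSum F j - colSum G j := rfl
      rw [this, hGcol j]
      rcases le_total (colSum F j) (b j) with h | h
      · rw [min_eq_left h]; simp [abs_nonneg]
      · rw [min_eq_right h]
        calc colSum F j - b j ≤ colSum X j - b j := by linarith [hcFX j]
          _ ≤ |colSum X j - b j| := le_abs_self _
    have hsle : s ≤ Da + Db := by rw [hsTG]; linarith
    have hl1 : l1m (Xh - X) ≤ 2 * (Da + Db) := by
      have habs : ∀ i j, |G i j + errA i * errB j / s - X i j| ≤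
          (X i j - G i j) + errA i * errB j / s := by
        intro i j
        have h1 : G i j + errA i * errB j / s - X i j
            = (G i j - X i j) + errA i * errB j / s := by ring
        rw [h1]
        calc |(G i j - X i j) + errA i * errB j / s|
            ≤ |G i j - X i j| + |errA i * errB j / s| := abs_add_le _ _
          _ = (X i j - G i j) + errA i * errB j / s := by
              rw [abs_of_nonpos (by linarith [hGleX i j]), neg_sub,
                abs_of_nonneg (div_nonneg (mul_nonneg (hA0 i) (hB0 j)) hs0)]
      calc l1m (Xh - X)
          ≤ ∑ i, ∑ j, ((X i j - G i j) + errA i * errB j / s) := by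
            simp only [l1m, Matrix.sub_apply]
            refine Finset.sum_le_sum fun i _ => Finset.sum_le_sum fun j _ => ?_
            simpa [hXhe] using habs i j
        _ = (TX - TG) + s := by
            simp only [Finset.sum_add_distrib, Finset.sum_sub_distrib]
            rw [← hTX, ← hTG]
            congr 1
            exact (Finset.sum_congr rfl fun i _ => hcorr_row i).trans hs.symm
        _ ≤ 2 * (Da + Db) := by linarith
    first
    | exact hl1
    | -- objective bound
      ( have hkey : inn C Xh - inn C X
            ≤ Cinf C * l1m (Xh - X) := by
          have : inn C Xh - inn C X
              = ∑ i, ∑ j, C i j * (Xh i j - X i j) := by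
            simp only [inn, mul_sub, Finset.sum_sub_distrib]
          rw [this]
          have : Cinf C * l1m (Xh - X)
              = ∑ i, ∑ j, Cinf C * |Xh i j - X i j| := by
            simp only [l1m, Matrix.sub_apply, Finset.mul_sum]
          rw [this]
          refine Finset.sum_le_sum fun i _ => Finset.sum_le_sum fun j _ => ?_
          calc C i j * (Xh i j - X i j)
              ≤ C i j * |Xh i j - X i j| :=
                mul_le_mul_of_nonneg_left (le_abs_self _) (hC i j)
            _ ≤ Cinf C * |Xh i j - X i j| :=
                mul_le_mul_of_nonneg_right (hCtop i j) (abs_nonneg _)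
        have h2 : Cinf C * l1m (Xh - X)
            ≤ Cinf C * (2 * (Da + Db)) := mul_le_mul_of_nonneg_left hl1 hCinf0
        calc inn C Xh
            ≤ inn C X + Cinf C * (2 * (Da + Db)) := by linarith
          _ = inn C X + 2 * Cinf C * (Da + Db) := by ring )
end
end
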